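/- arXiv:1404.7541 — 5 statements merged into one kernel-verified Lean document; each statement's English description precedes it below -/
import Mathlib

section
/- Let S be a set of propositional clauses over atoms 𝒫 and p ∈ 𝒫. Then a clause c over 𝒫 \ {p} is entailed by S if and only if c is entailed by S|_{𝒫\{p}} ∪ Res(S,p), where Res(S,p) is the set of all resolvents of clauses in S on the atom p. -/
variable {α : Type} [DecidableEq α]

/-- A literal is an atom with a sign (`true` = positive); a clause is a finite
    set of literals, read disjunctively. -/
abbrev Clause (α : Type) := Finset (α × Bool)

/-- A valuation satisfies a clause if some literal of it is true. -/
def satC (v : α → Bool) (c : Clause α) : Prop := ∃ l ∈ c, v l.1 = l.2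

/-- A valuation satisfies a set of clauses (read conjunctively). -/
def satS (v : α → Bool) (S : Set (Clause α)) : Prop := ∀ c ∈ S, satC v c

/-- A clause mentions atom p if it contains p positively or negatively. -/
def mentions (p : α) (c : Clause α) : Prop := (p, true) ∈ c ∨ (p, false) ∈ c

/-- All resolvents of clauses of S on the atom p. -/
def Res (S : Set (Clause α)) (p : α) : Set (Clause α) :=
  {c | ∃ c1 ∈ S, ∃ c2 ∈ S, (p, true) ∈ c1 ∧ (p, false) ∈ c2 ∧
        c = c1.erase (p, true) ∪ c2.erase (p, false)}

lemma satC_agree {v w : α → Bool} {p : α} (c : Clause α) (hc : ¬ mentions p c)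
    (hagree : ∀ q, q ≠ p → v q = w q) : satC v c → satC w c := by
  rintro ⟨⟨a, b⟩, hl, hvl⟩
  refine ⟨(a, b), hl, ?_⟩
  have hap : a ≠ p := by
    rintro rfl
    cases b
    · exact hc (Or.inr hl)
    · exact hc (Or.inl hl)
  rw [← hagree a hap]; exact hvl

/-- For clauses not mentioning p, entailment from S coincides with entailment
    from the p-free part of S together with all resolvents on p. -/
theorem resolution_forget_entailment (S : Set (Clause α)) (p : α)
    (c : Clause α) (hc : ¬ mentions p c) :
    (∀ v : α → Bool, satS v S → satC v c) ↔
      (∀ v : α → Bool, satS v ({d ∈ S | ¬ mentions p d} ∪ Res S p) → satC v c) := by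
  constructor
  · intro h v hv
    by_cases hT : satS (Function.update v p true) S
    · exact satC_agree c hc (fun q hq => (Function.update_of_ne hq _ _)) (h _ hT)
    by_cases hF : satS (Function.update v p false) S
    · exact satC_agree c hc (fun q hq => (Function.update_of_ne hq _ _)) (h _ hF)
    · exfalso
      simp only [satS, not_forall] at hT hF
      obtain ⟨c1, hc1S, hc1⟩ := hT
      obtain ⟨c2, hc2S, hc2⟩ := hF
      have hpc1 : (p, false) ∈ c1 := by
        by_contra hpf
        have hpt : (p, true) ∉ c1 := fun h => hc1 ⟨(p, true), h, by simp⟩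
        have hm : ¬ mentions p c1 := fun h => h.elim hpt hpf
        exact hc1 (satC_agree c1 hm (fun q hq => (Function.update_of_ne hq _ _).symm)
          (hv c1 (Or.inl ⟨hc1S, hm⟩)))
      have hpc2 : (p, true) ∈ c2 := by
        by_contra hpt
        have hpf : (p, false) ∉ c2 := fun h => hc2 ⟨(p, false), h, by simp⟩
        have hm : ¬ mentions p c2 := fun h => h.elim hpt hpf
        exact hc2 (satC_agree c2 hm (fun q hq => (Function.update_of_ne hq _ _).symm)
          (hv c2 (Or.inl ⟨hc2S, hm⟩)))
      have hr : (c2.erase (p, true) ∪ c1.erase (p, false)) ∈ Res S p :=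
        ⟨c2, hc2S, c1, hc1S, hpc2, hpc1, rfl⟩
      obtain ⟨⟨a, b⟩, hl, hvl⟩ := hv _ (Or.inr hr)
      rcases Finset.mem_union.mp hl with hl | hl
      · apply hc2
        refine ⟨(a, b), Finset.mem_of_mem_erase hl, ?_⟩
        have hne : (a, b) ≠ (p, true) := Finset.ne_of_mem_erase hl
        by_cases hap : a = p
        · subst hap
          cases b
          · simp
          · exact absurd rfl hne
        · rw [Function.update_of_ne hap]; exact hvl
      · apply hc1
        refine ⟨(a, b), Finset.mem_of_mem_erase hl, ?_⟩
        have hne : (a, b) ≠ (p, false) := Finset.ne_of_mem_erase hl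
        by_cases hap : a = p
        · subst hap
          cases b
          · exact absurd rfl hne
          · simp
        · rw [Function.update_of_ne hap]; exact hvl
  · intro h v hv
    apply h v
    rintro d (⟨hdS, -⟩ | ⟨c1, hc1S, c2, hc2S, hp1, hp2, rfl⟩)
    · exact hv d hdS
    · obtain ⟨l1, hl1, hvl1⟩ := hv c1 hc1S
      obtain ⟨l2, hl2, hvl2⟩ := hv c2 hc2S
      by_cases hvp : v p = true
      · refine ⟨l2, Finset.mem_union_right _ (Finset.mem_erase.mpr ⟨?_, hl2⟩), hvl2⟩
        rintro rfl; rw [hvp] at hvl2; exact Bool.true_eq_false.mp hvl2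
      · refine ⟨l1, Finset.mem_union_left _ (Finset.mem_erase.mpr ⟨?_, hl1⟩), hvl1⟩
        rintro rfl; exact hvp hvl1
end

section
/- The result of forgetting satisfies the irrelevance-preservation postulate: for any rule r with IR(r,𝒜′) (r is strongly equivalent to a program not mentioning atoms of 𝒜′), P ⊨_s r if and only if Forget(P,𝒜′) ⊨_s r. -/
/-- A disjunctive rule A ← B, not C with disjunctive head, positive body, negated body. -/
structure Rule (α : Type) where
  head : Finset α
  pos : Finset α
  neg : Finset α

variable {α : Type} [DecidableEq α]

/-- The signature (set of atoms mentioned) of a rule. -/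
def Rule.sig (r : Rule α) : Finset α := r.head ∪ r.pos ∪ r.neg

/-- Classical satisfaction of a rule by interpretation Y. -/
def clSat (Y : Set α) (r : Rule α) : Prop :=
  ((↑r.pos : Set α) ⊆ Y ∧ ∀ c ∈ r.neg, c ∉ Y) → ∃ a ∈ r.head, a ∈ Y

/-- Satisfaction of the reduct r^Y by X. -/
def redSat (X Y : Set α) (r : Rule α) : Prop :=
  (∀ c ∈ r.neg, c ∉ Y) → ((↑r.pos : Set α) ⊆ X → ∃ a ∈ r.head, a ∈ X)

/-- (X,Y) is an SE model of the single rule r. -/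
def ruleSE (X Y : Set α) (r : Rule α) : Prop := clSat Y r ∧ redSat X Y r

/-- (X,Y) is an SE model of the program P (alphabet = the whole type α). -/
def isSE (X Y : Set α) (P : Set (Rule α)) : Prop :=
  X ⊆ Y ∧ ∀ r ∈ P, ruleSE X Y r

/-- SE entailment of a rule. -/
def entails (P : Set (Rule α)) (r : Rule α) : Prop :=
  ∀ X Y : Set α, isSE X Y P → ruleSE X Y r

/-- Forget(P, A'): the SE consequences of P that do not mention atoms of A'. -/
def Forget (P : Set (Rule α)) (A' : Set α) : Set (Rule α) :=
  {r | (↑r.sig : Set α) ∩ A' = ∅ ∧ entails P r}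

/-- SE models of P over alphabet B. -/
def SEA (B : Set α) (P : Set (Rule α)) : Set (Set α × Set α) :=
  {w | w.1 ⊆ w.2 ∧ w.2 ⊆ B ∧ ∀ r ∈ P, ruleSE w.1 w.2 r}

/-- IR(Q,B): Q is strongly equivalent to a program whose signature avoids B. -/
def IR (Q : Set (Rule α)) (B : Set α) : Prop :=
  ∃ Q' : Set (Rule α), (∀ X Y : Set α, isSE X Y Q ↔ isSE X Y Q') ∧
    ∀ r ∈ Q', (↑r.sig : Set α) ∩ B = ∅

/-- If a rule is irrelevant to A', then forgetting A' does not affect whether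
    it is entailed. -/
theorem forget_preserves_irrelevant (P : Set (Rule α)) (hP : P.Finite) (A' : Set α)
    (r : Rule α) (hir : IR {r} A') :
    entails P r ↔ entails (Forget P A') r := by
  obtain ⟨Q', hQeq, hQsig⟩ := hir
  constructor
  · intro hPr X Y hXY
    -- every rule of Q' is in Forget P A'
    have hQ'sub : Q' ⊆ Forget P A' := by
      intro q hq
      refine ⟨hQsig q hq, ?_⟩
      intro X Y hSE
      have hr : isSE X Y ({r} : Set (Rule α)) := by
        refine ⟨hSE.1, ?_⟩
        intro s hs
        rcases hs with rfl
        exact hPr X Y hSE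
      exact ((hQeq X Y).mp hr).2 q hq
    have hSEQ' : isSE X Y Q' := ⟨hXY.1, fun q hq => hXY.2 q (hQ'sub hq)⟩
    exact ((hQeq X Y).mpr hSEQ').2 r rfl
  · intro hFr X Y hXY
    refine hFr X Y ⟨hXY.1, ?_⟩
    intro q hq
    exact hq.2 X Y hXY
end

section
/- The inference rule WGPPE is SE-sound: every SE model of the two rules A₁ ← B₁, x, not C₁ and A₂;x ← B₂, not C₂ is an SE model of A₁;A₂ ← B₁,B₂, not C₁, not C₂. -/
variable {α : Type} [DecidableEq α]

/-- WGPPE is SE-sound. -/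
theorem wgppe_sound (x : α) (A1 B1 C1 A2 B2 C2 : Finset α)
    (X Y : Set α) (hXY : X ⊆ Y)
    (h1 : ruleSE X Y ⟨A1, insert x B1, C1⟩)
    (h2 : ruleSE X Y ⟨insert x A2, B2, C2⟩) :
    ruleSE X Y ⟨A1 ∪ A2, B1 ∪ B2, C1 ∪ C2⟩ := by
  obtain ⟨hc1, hr1⟩ := h1
  obtain ⟨hc2, hr2⟩ := h2
  simp only [ruleSE, clSat, redSat, Finset.coe_union, Finset.coe_insert,
    Finset.mem_union, Finset.mem_insert, Set.union_subset_iff,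
    Set.insert_subset_iff] at *
  constructor
  · rintro ⟨⟨hB1, hB2⟩, hC⟩
    have hCY1 : ∀ c ∈ C1, c ∉ Y := fun c hc => hC c (Or.inl hc)
    have hCY2 : ∀ c ∈ C2, c ∉ Y := fun c hc => hC c (Or.inr hc)
    obtain ⟨a, ha, haY⟩ := hc2 ⟨hB2, hCY2⟩
    rcases ha with rfl | ha
    · obtain ⟨b, hb, hbY⟩ := hc1 ⟨⟨haY, hB1⟩, hCY1⟩
      exact ⟨b, Or.inl hb, hbY⟩
    · exact ⟨a, Or.inr ha, haY⟩
  · intro hC ⟨hB1, hB2⟩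
    have hCY1 : ∀ c ∈ C1, c ∉ Y := fun c hc => hC c (Or.inl hc)
    have hCY2 : ∀ c ∈ C2, c ∉ Y := fun c hc => hC c (Or.inr hc)
    obtain ⟨a, ha, haX⟩ := hr2 hCY2 hB2
    rcases ha with rfl | ha
    · obtain ⟨b, hb, hbX⟩ := hr1 hCY1 ⟨haX, hB1⟩
      exact ⟨b, Or.inl hb, hbX⟩
    · exact ⟨a, Or.inr ha, haX⟩
end

section
/- The inference rule S-HYP is SE-sound: every SE model of the rules A_i ← B_i, not x_i, not C_i (for i = 1,…,n) together with A ← x₁,…,x_n, not C is an SE model of A₁;…;A_n ← B₁,…,B_n, not C₁,…,not C_n, not A, not C. -/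
variable {α : Type} [DecidableEq α]

/-- S-HYP is SE-sound. -/
theorem shyp_sound (n : ℕ) (x : Fin n → α) (A B C : Fin n → Finset α)
    (A0 C0 : Finset α) (X Y : Set α) (hXY : X ⊆ Y)
    (h : ∀ i : Fin n, ruleSE X Y ⟨A i, B i, insert (x i) (C i)⟩)
    (h' : ruleSE X Y ⟨A0, Finset.image x Finset.univ, C0⟩) :
    ruleSE X Y ⟨Finset.univ.biUnion A, Finset.univ.biUnion B,
      Finset.univ.biUnion C ∪ A0 ∪ C0⟩ := by

  have hCnY : ∀ (hn : ∀ c ∈ Finset.univ.biUnion C ∪ A0 ∪ C0, c ∉ Y) (i : Fin n),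
      ∀ c ∈ C i, c ∉ Y := by
    intro hn i c hc
    exact hn c (by simp [Finset.mem_union, Finset.mem_biUnion]; exact Or.inl ⟨i, hc⟩)
  have hA0 : ∀ (hn : ∀ c ∈ Finset.univ.biUnion C ∪ A0 ∪ C0, c ∉ Y) a, a ∈ A0 → a ∉ Y := by
    intro hn a ha
    exact hn a (by simp [Finset.mem_union]; tauto)
  have hC0 : ∀ (hn : ∀ c ∈ Finset.univ.biUnion C ∪ A0 ∪ C0, c ∉ Y) a, a ∈ C0 → a ∉ Y := by
    intro hn a ha
    exact hn a (by simp [Finset.mem_union]; tauto)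
  constructor
  · rintro ⟨hpos, hneg⟩
    by_cases hx : ∀ i, x i ∈ Y
    · exfalso
      obtain ⟨a, ha, haY⟩ := h'.1 ⟨by
        intro a ha
        simp only [Finset.coe_image, Finset.coe_univ, Set.image_univ, Set.mem_range] at ha
        obtain ⟨i, rfl⟩ := ha
        exact hx i, hC0 hneg⟩
      exact hA0 hneg a ha haY
    · push_neg at hx
      obtain ⟨i, hi⟩ := hx
      obtain ⟨a, ha, haY⟩ := (h i).1 ⟨by
        intro a ha
        exact hpos (by simpa using Finset.mem_biUnion.2 ⟨i, Finset.mem_univ i, ha⟩), by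
        intro c hc
        rcases Finset.mem_insert.1 hc with rfl | hc
        · exact hi
        · exact hCnY hneg i c hc⟩
      exact ⟨a, Finset.mem_biUnion.2 ⟨i, Finset.mem_univ i, ha⟩, haY⟩
  · intro hneg hpos
    by_cases hx : ∀ i, x i ∈ Y
    · exfalso
      obtain ⟨a, ha, haY⟩ := h'.1 ⟨by
        intro a ha
        simp only [Finset.coe_image, Finset.coe_univ, Set.image_univ, Set.mem_range] at ha
        obtain ⟨i, rfl⟩ := ha
        exact hx i, hC0 hneg⟩
      exact hA0 hneg a ha haY
    · push_neg at hx
      obtain ⟨i, hi⟩ := hx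
      obtain ⟨a, ha, haX⟩ := (h i).2 (by
        intro c hc
        rcases Finset.mem_insert.1 hc with rfl | hc
        · exact hi
        · exact hCnY hneg i c hc) (by
        intro a ha
        exact hpos (by simpa using Finset.mem_biUnion.2 ⟨i, Finset.mem_univ i, ha⟩))
      exact ⟨a, Finset.mem_biUnion.2 ⟨i, Finset.mem_univ i, ha⟩, haX⟩
end

section
/- The inference rule Nonmin (weakening) is SE-sound: every SE model of A ← B, not C is an SE model of A;X ← B,Y, not C, not Z, for any finite sets of atoms X, Y, Z. -/
variable {α : Type} [DecidableEq α]

/-- Nonmin (weakening) is SE-sound. -/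
theorem nonmin_sound (A B C X0 Y0 Z0 : Finset α)
    (X Y : Set α) (hXY : X ⊆ Y) (h : ruleSE X Y ⟨A, B, C⟩) :
    ruleSE X Y ⟨A ∪ X0, B ∪ Y0, C ∪ Z0⟩ := by
  obtain ⟨h1, h2⟩ := h
  constructor
  · intro ⟨hpos, hneg⟩
    obtain ⟨a, ha, haY⟩ := h1 ⟨fun x hx => hpos (by simp [hx]),
      fun c hc => hneg c (by simp [hc])⟩
    exact ⟨a, by simp [ha], haY⟩
  · intro hneg hpos
    obtain ⟨a, ha, haX⟩ := h2 (fun c hc => hneg c (by simp [hc]))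
      (fun x hx => hpos (by simp [hx]))
    exact ⟨a, by simp [ha], haX⟩
end
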